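/- Let C_1, ..., C_N be i.i.d. real-valued random variables with a density on a compact interval that is bounded and bounded away from zero. For a fixed point c in the support, let U_1 = C_{j_1} - c where j_1 minimizes |C_j - c| over j = 1,...,N. Then for every q ≥ 1 there exists a constant M_q independent of N such that E[(N |U_1|)^q] ≤ M_q; that is, all moments of N|U_1| are uniformly bounded in N. -/

import Mathlib

open MeasureTheory ProbabilityTheory
open scoped ENNReal

/-- Nearest-neighbor matching discrepancy in one dimension: if `C_1, ..., C_N` are i.i.d. with a
density bounded above and below on a compact interval containing `c`, then all moments of
`N · |U_1|`, where `|U_1| = min_j |C_j - c|`, are uniformly bounded in `N`. -/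
theorem matching_discrepancy_moments {Ω : Type*} {mΩ : MeasurableSpace Ω}
    (μ : Measure Ω) [IsProbabilityMeasure μ]
    (X : ℕ → Ω → ℝ) (hXmeas : ∀ j, Measurable (X j))
    (hindep : iIndepFun X μ)
    (f : ℝ → ℝ) (a b : ℝ) (hab : a < b) (m M : ℝ) (hm : 0 < m)
    (hdens : ∀ j, Measure.map (X j) μ = volume.withDensity (fun x => ENNReal.ofReal (f x)))
    (hsupp : ∀ x, x ∉ Set.Icc a b → f x = 0)
    (hlow : ∀ x ∈ Set.Icc a b, m ≤ f x) (hup : ∀ x, f x ≤ M)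
    (c : ℝ) (hc : c ∈ Set.Icc a b) :
    ∀ q : ℝ, 1 ≤ q → ∃ Mq : ℝ, ∀ N : ℕ, 1 ≤ N →
      ∫ ω, ((N : ℝ) * (⨅ j : Fin N, |X j ω - c|)) ^ q ∂μ ≤ Mq := by
  intro q hq
  have hq0 : (0:ℝ) < q := lt_of_lt_of_le one_pos hq
  set L : ℝ := (b - a) / 2 with hLdef
  have hL : 0 < L := by
    have : 0 < b - a := sub_pos.mpr hab
    positivity
  set r : ℝ := m / 2 with hrdef
  have hr : 0 < r := by positivity
  -- measurability of the basic sets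
  have habs : Measurable fun x : ℝ => |x - c| := by fun_prop
  have hSmeas : ∀ s : ℝ, MeasurableSet {x : ℝ | s < |x - c|} :=
    fun s => measurableSet_lt measurable_const habs
  have hmap : ∀ (j : ℕ) (S : Set ℝ), MeasurableSet S →
      μ ((X j) ⁻¹' S) = ∫⁻ x in S, ENNReal.ofReal (f x) := by
    intro j S hS
    rw [← Measure.map_apply (hXmeas j) hS, hdens j, withDensity_apply _ hS]
  -- vanishing of the tail beyond the support
  have key2 : ∀ (j : ℕ) (s : ℝ), b - a ≤ s → μ ((X j) ⁻¹' {x : ℝ | s < |x - c|}) = 0 := by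
    intro j s hs
    rw [hmap j _ (hSmeas s)]
    have h0 : ∀ᵐ x ∂volume, x ∈ {x : ℝ | s < |x - c|} →
        ENNReal.ofReal (f x) = (0 : ℝ≥0∞) := by
      refine ae_of_all _ fun x hx => ?_
      have hxn : x ∉ Set.Icc a b := by
        intro hxm
        have h1 : |x - c| ≤ b - a := by
          rw [abs_sub_le_iff]
          constructor <;>
          · rcases hxm with ⟨h2, h3⟩; rcases hc with ⟨h4, h5⟩; linarith
        exact absurd (lt_of_le_of_lt hs hx) (not_lt.mpr h1)
      simp [hsupp x hxn]
    rw [setLIntegral_congr_fun_ae (hSmeas s) h0]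
    simp
  -- single-variable tail bound
  have key1 : ∀ (j : ℕ) (s : ℝ), 0 ≤ s →
      μ ((X j) ⁻¹' {x : ℝ | s < |x - c|}) ≤
        ENNReal.ofReal (Real.exp (-(m * min s L))) := by
    intro j s hs
    set s' : ℝ := min s L with hs'def
    have hs'0 : 0 ≤ s' := le_min hs hL.le
    have hs'L : s' ≤ L := min_le_right _ _
    have hs's : s' ≤ s := min_le_left _ _
    -- choose a subinterval of [a,b] of length s' within distance s of c
    obtain ⟨u, v, huv, hIab, hIc⟩ :
        ∃ u v : ℝ, v - u = s' ∧ Set.Icc u v ⊆ Set.Icc a b ∧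
          Set.Icc u v ⊆ {x : ℝ | |x - c| ≤ s} := by
      rcases le_total L (b - c) with hcb | hcb
      · refine ⟨c, c + s', by ring, fun x hx => ⟨?_, ?_⟩, fun x hx => ?_⟩
        · rcases hx with ⟨h1, _⟩; rcases hc with ⟨h2, _⟩; linarith
        · rcases hx with ⟨_, h1⟩; linarith
        · rcases hx with ⟨h1, h2⟩
          rw [Set.mem_setOf_eq, abs_le]; constructor <;> linarith
      · have hca : L ≤ c - a := by
          rcases hc with ⟨h1, h2⟩
          have : b - a = 2 * L := by rw [hLdef]; ring
          linarith
        refine ⟨c - s', c, by ring, fun x hx => ⟨?_, ?_⟩, fun x hx => ?_⟩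
        · rcases hx with ⟨h1, _⟩; linarith
        · rcases hx with ⟨_, h1⟩; rcases hc with ⟨_, h2⟩; linarith
        · rcases hx with ⟨h1, h2⟩
          rw [Set.mem_setOf_eq, abs_le]; constructor <;> linarith
    -- lower bound for the complement event
    have hcompl : ENNReal.ofReal (m * s') ≤ μ ((X j) ⁻¹' {x : ℝ | |x - c| ≤ s}) := by
      rw [hmap j _ (measurableSet_le habs measurable_const)]
      calc ENNReal.ofReal (m * s')
          = ∫⁻ _ in Set.Icc u v, ENNReal.ofReal m ∂volume := by
            rw [setLIntegral_const, Real.volume_Icc, huv,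
              ← ENNReal.ofReal_mul hm.le]
        _ ≤ ∫⁻ x in Set.Icc u v, ENNReal.ofReal (f x) ∂volume := by
            refine setLIntegral_mono' measurableSet_Icc fun x hx => ?_
            exact ENNReal.ofReal_le_ofReal (hlow x (hIab hx))
        _ ≤ ∫⁻ x in {x : ℝ | |x - c| ≤ s}, ENNReal.ofReal (f x) ∂volume :=
            lintegral_mono_set hIc
    -- pass to the complement
    have hcset : {x : ℝ | s < |x - c|} = {x : ℝ | |x - c| ≤ s}ᶜ := by
      ext x; simp [not_le]
    have hprecompl : (X j) ⁻¹' {x : ℝ | s < |x - c|} =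
        ((X j) ⁻¹' {x : ℝ | |x - c| ≤ s})ᶜ := by
      rw [hcset, Set.preimage_compl]
    have hmeasle : MeasurableSet ((X j) ⁻¹' {x : ℝ | |x - c| ≤ s}) :=
      (measurableSet_le habs measurable_const).preimage (hXmeas j)
    rw [hprecompl, prob_compl_eq_one_sub hmeasle]
    calc (1 : ℝ≥0∞) - μ ((X j) ⁻¹' {x : ℝ | |x - c| ≤ s})
        ≤ 1 - ENNReal.ofReal (m * s') := tsub_le_tsub_left hcompl 1
      _ = ENNReal.ofReal (1 - m * s') := by
          rw [ENNReal.ofReal_sub 1 (by positivity), ENNReal.ofReal_one]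
      _ ≤ ENNReal.ofReal (Real.exp (-(m * s'))) := by
          apply ENNReal.ofReal_le_ofReal
          have := Real.add_one_le_exp (-(m * s'))
          linarith
  -- the uniform constant
  set Mq : ℝ := q * ∫ t in Set.Ioi (0:ℝ), Real.exp (-(r * t)) * t ^ (q - 1) with hMqdef
  have hInt : IntegrableOn (fun t : ℝ => Real.exp (-(r * t)) * t ^ (q - 1))
      (Set.Ioi 0) volume := by
    have h := integrableOn_rpow_mul_exp_neg_mul_rpow
      (show (-1:ℝ) < q - 1 by linarith) (show (0:ℝ) < 1 by norm_num) hr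
    refine h.congr_fun (fun x hx => ?_) measurableSet_Ioi
    beta_reduce; rw [Real.rpow_one, neg_mul]; ring
  have hMq0 : 0 ≤ Mq := by
    apply mul_nonneg hq0.le
    refine setIntegral_nonneg measurableSet_Ioi fun t ht => ?_
    exact mul_nonneg (Real.exp_nonneg _) (Real.rpow_nonneg (le_of_lt ht) _)
  refine ⟨Mq, fun N hN => ?_⟩
  haveI : Nonempty (Fin N) := Fin.pos_iff_nonempty.mp hN
  have hNpos : (0:ℝ) < N := by exact_mod_cast hN
  set Y : Ω → ℝ := fun ω => (N : ℝ) * ⨅ j : Fin N, |X j ω - c| with hYdef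
  have hInfMeas : Measurable fun ω => ⨅ j : Fin N, |X (j:ℕ) ω - c| :=
    Measurable.iInf fun j => ((hXmeas j).sub_const c).abs
  have hYmeas : Measurable Y := hInfMeas.const_mul _
  have hInf_nonneg : ∀ ω, 0 ≤ ⨅ j : Fin N, |X (j:ℕ) ω - c| :=
    fun ω => le_ciInf fun j => abs_nonneg _
  have hY_nonneg : ∀ ω, 0 ≤ Y ω := fun ω => mul_nonneg hNpos.le (hInf_nonneg ω)
  -- tail bound for Y
  have tail : ∀ t : ℝ, 0 < t → μ {ω | t < Y ω} ≤ ENNReal.ofReal (Real.exp (-(r * t))) := by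
    intro t ht
    have hset : {ω | t < Y ω} =
        ⋂ i ∈ Finset.range N, (X i) ⁻¹' {x : ℝ | t / N < |x - c|} := by
      ext ω
      simp only [Set.mem_setOf_eq, Set.mem_iInter, Finset.mem_range, Set.mem_preimage,
        hYdef]
      constructor
      · intro h i hi
        have h1 : t / N < ⨅ j : Fin N, |X (j:ℕ) ω - c| :=
          (div_lt_iff₀ hNpos).mpr (by rw [mul_comm]; exact h)
        exact lt_of_lt_of_le h1 (ciInf_le (Finite.bddBelow_range _) (⟨i, hi⟩ : Fin N))
      · intro h
        obtain ⟨j0, hj0⟩ := exists_eq_ciInf_of_finite (f := fun j : Fin N => |X (j:ℕ) ω - c|)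
        have h1 : t / N < ⨅ j : Fin N, |X (j:ℕ) ω - c| := by
          rw [← hj0]; exact h j0 j0.isLt
        calc t = t / N * N := by field_simp
          _ < (⨅ j : Fin N, |X (j:ℕ) ω - c|) * N := by
              exact mul_lt_mul_of_pos_right h1 hNpos
          _ = (N:ℝ) * ⨅ j : Fin N, |X (j:ℕ) ω - c| := mul_comm _ _
    rcases lt_or_ge (b - a) (t / N) with hbig | hsmall
    · -- beyond the support: measure zero
      have h0 : μ {ω | t < Y ω} ≤ μ ((X 0) ⁻¹' {x : ℝ | t / N < |x - c|}) := by
        rw [hset]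
        exact measure_mono (Set.biInter_subset_of_mem (Finset.mem_range.mpr hN))
      rw [key2 0 (t / N) hbig.le] at h0
      exact le_trans h0 zero_le
    · rw [hset, hindep.meas_biInter
        (fun i _ => ⟨{x : ℝ | t / N < |x - c|}, hSmeas _, rfl⟩)]
      have hone : ∀ i ∈ Finset.range N,
          μ ((X i) ⁻¹' {x : ℝ | t / N < |x - c|}) ≤
            ENNReal.ofReal (Real.exp (-(m * min (t / N) L))) :=
        fun i _ => key1 i (t / N) (by positivity)
      calc ∏ i ∈ Finset.range N, μ ((X i) ⁻¹' {x : ℝ | t / N < |x - c|})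
          ≤ ∏ _i ∈ Finset.range N, ENNReal.ofReal (Real.exp (-(m * min (t / N) L))) :=
            Finset.prod_le_prod' hone
        _ = ENNReal.ofReal (Real.exp (-(m * min (t / N) L)) ^ N) := by
            rw [Finset.prod_const, Finset.card_range,
              ENNReal.ofReal_pow (Real.exp_nonneg _)]
        _ ≤ ENNReal.ofReal (Real.exp (-(r * t))) := by
            apply ENNReal.ofReal_le_ofReal
            rw [← Real.exp_nat_mul]
            apply Real.exp_le_exp.mpr
            rcases le_total (t / N) L with hmin | hmin
            · rw [min_eq_left hmin]
              have : (N:ℝ) * (t / N) = t := by field_simp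
              have h2 : (N:ℝ) * -(m * (t / N)) = -(m * t) := by
                rw [mul_neg]; rw [show (N:ℝ) * (m * (t/N)) = m * ((N:ℝ) * (t/N)) by ring,
                  this]
              rw [h2]
              have : r * t ≤ m * t := by
                apply mul_le_mul_of_nonneg_right _ ht.le
                rw [hrdef]; linarith
              linarith
            · rw [min_eq_right hmin]
              have htN : t ≤ (N:ℝ) * (b - a) := by
                rw [mul_comm]; exact (div_le_iff₀ hNpos).mp hsmall
              have hba : b - a = 2 * L := by rw [hLdef]; ring
              have : r * t ≤ (N:ℝ) * (m * L) := by
                rw [hrdef]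
                calc m / 2 * t ≤ m / 2 * ((N:ℝ) * (2 * L)) := by
                      apply mul_le_mul_of_nonneg_left _ (by positivity)
                      rw [← hba]; exact htN
                  _ = (N:ℝ) * (m * L) := by ring
              rw [mul_neg]
              linarith
  -- from the tail bound to the moment bound, via the layer cake formula
  have lc := lintegral_rpow_eq_lintegral_meas_lt_mul μ (f := Y)
    (ae_of_all μ hY_nonneg) hYmeas.aemeasurable hq0
  have hrpow_meas : Measurable fun ω => Y ω ^ q :=
    (Real.continuous_rpow_const (le_trans zero_le_one hq)).measurable.comp hYmeas
  have step1 : ∫ ω, Y ω ^ q ∂μ = (∫⁻ ω, ENNReal.ofReal (Y ω ^ q) ∂μ).toReal := by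
    rw [integral_eq_lintegral_of_nonneg_ae
      (ae_of_all μ fun ω => Real.rpow_nonneg (hY_nonneg ω) q)
      hrpow_meas.aestronglyMeasurable]
  have step2 : ∫⁻ ω, ENNReal.ofReal (Y ω ^ q) ∂μ ≤ ENNReal.ofReal Mq := by
    rw [lc]
    have hbound : ∫⁻ t in Set.Ioi (0:ℝ), μ {a | t < Y a} * ENNReal.ofReal (t ^ (q - 1)) ≤
        ∫⁻ t in Set.Ioi (0:ℝ), ENNReal.ofReal (Real.exp (-(r * t)) * t ^ (q - 1)) := by
      refine setLIntegral_mono' measurableSet_Ioi fun t ht => ?_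
      rw [ENNReal.ofReal_mul (Real.exp_nonneg _)]
      exact mul_le_mul_left (tail t ht) _
    have heq : ∫⁻ t in Set.Ioi (0:ℝ),
        ENNReal.ofReal (Real.exp (-(r * t)) * t ^ (q - 1)) =
        ENNReal.ofReal (∫ t in Set.Ioi (0:ℝ), Real.exp (-(r * t)) * t ^ (q - 1)) := by
      rw [← ofReal_integral_eq_lintegral_ofReal hInt]
      filter_upwards [self_mem_ae_restrict measurableSet_Ioi] with t ht
      exact mul_nonneg (Real.exp_nonneg _) (Real.rpow_nonneg (le_of_lt ht) _)
    calc ENNReal.ofReal q * ∫⁻ t in Set.Ioi (0:ℝ),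
          μ {a | t < Y a} * ENNReal.ofReal (t ^ (q - 1))
        ≤ ENNReal.ofReal q *
          ENNReal.ofReal (∫ t in Set.Ioi (0:ℝ), Real.exp (-(r * t)) * t ^ (q - 1)) := by
          rw [← heq]; exact mul_le_mul_right hbound _
      _ = ENNReal.ofReal Mq := by
          rw [hMqdef, ENNReal.ofReal_mul hq0.le]
  calc ∫ ω, ((N : ℝ) * (⨅ j : Fin N, |X (j:ℕ) ω - c|)) ^ q ∂μ
      = (∫⁻ ω, ENNReal.ofReal (Y ω ^ q) ∂μ).toReal := step1
    _ ≤ Mq := ENNReal.toReal_le_of_le_ofReal hMq0 step2
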